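/- Let Σ be a finite alphabet of size q ≥ 2, n ≥ 1, δ ∈ (0,1), and set α = (1 − 1/q)(1 + δ). Let (K, Enc, Dec) be a finitary messageless secret-key code over Σ with codeword length n satisfying the relaxed average soundness condition P_{sk, Û}[Dec(sk, Û) ≠ invalid] ≤ ε, where Û is uniform on Σ^n independent of sk and ε ∈ [0,1]. Let f be the truncated uniform resampler with budget αn applied to γ = Enc(sk). Then the tamper-detection failure probability satisfies P[Dec(sk, f(γ)) ≠ tampered ∧ f(γ) ≠ γ] ≥ 1 − ε − q^{−n} − exp(−δ²(1 − 1/q)n/3). -/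

import Mathlib

open Finset Classical

/-- Decoding outcomes of a messageless secret-key code. -/
inductive DecOut where
  | valid
  | invalid
  | tampered
deriving DecidableEq

/-- The truncated uniform resampler with budget `b`: on codeword `γ` and uniform
randomness `u`, it outputs `u` if `dist(u, γ) ≤ b` and `γ` otherwise. -/
noncomputable def resample {S : Type} [Fintype S] [DecidableEq S] {n : ℕ}
    (b : ℝ) (γ u : Fin n → S) : Fin n → S :=
  if (hammingDist u γ : ℝ) ≤ b then u else γ

/-! The failure event contains, for each key, the event that the uniform word `U` decodes to
`invalid`, lies in the Hamming ball of radius `αn` around the codeword (so the resampler outputs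
`U` itself) and differs from the codeword. Its complement is covered by three events of
probabilities at most `ε`, `q⁻ⁿ`, and the Chernoff tail of the distance, a sum of `n` independent
Bernoulli(`1 - 1/q`) variables: Markov's inequality for `(1 + δ) ^ dist`, whose mean is
`(1 + (1 - 1/q) δ) ^ n`, together with `(1 + δ) log (1 + δ) ≥ δ + δ² / 3` on `[0, 1]`. -/

open Real

theorem add_sq_div_three_le_mul_log_one_add {δ : ℝ} (h0 : 0 ≤ δ) (h1 : δ ≤ 1) :
    δ + δ ^ 2 / 3 ≤ (1 + δ) * log (1 + δ) :=
  calc δ + δ ^ 2 / 3 ≤ (1 + δ) * (2 * δ / (δ + 2)) := by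
        rw [mul_div_assoc', le_div_iff₀ (by linarith)]
        nlinarith [mul_nonneg (sq_nonneg δ) (sub_nonneg.2 h1)]
    _ ≤ (1 + δ) * log (1 + δ) :=
        mul_le_mul_of_nonneg_left (le_log_one_add_of_nonneg h0) (by linarith)

section HammingTail

variable {ι S : Type*} [Fintype ι] [DecidableEq S]

theorem pow_hammingDist_eq_prod {M : Type*} [CommMonoid M] (u γ : ι → S) (x : M) :
    x ^ hammingDist u γ = ∏ i, if u i = γ i then 1 else x := by
  rw [hammingDist, ← prod_const, prod_filter]
  exact prod_congr rfl fun i _ => by split_ifs <;> simp_all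

variable [DecidableEq ι] [Fintype S]

theorem sum_pow_hammingDist {R : Type*} [CommRing R] (γ : ι → S) (x : R) :
    ∑ u : ι → S, x ^ hammingDist u γ = (1 + (Fintype.card S - 1) * x) ^ Fintype.card ι := by
  have hfiber (a : S) : ∑ s : S, (if s = a then 1 else x) = 1 + (Fintype.card S - 1) * x := by
    rw [← add_sum_erase _ _ (mem_univ a), if_pos rfl,
      sum_congr rfl fun s hs => if_neg (ne_of_mem_erase hs), sum_const,
      card_erase_of_mem (mem_univ a), card_univ, nsmul_eq_mul,
      Nat.cast_sub (Fintype.card_pos_iff.2 ⟨a⟩), Nat.cast_one]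
  simp_rw [pow_hammingDist_eq_prod]
  rw [← Fintype.prod_sum fun i s => if s = γ i then 1 else x]
  simp_rw [hfiber, prod_const, card_univ]

theorem card_hammingDist_gt_le [Nonempty S] (γ : ι → S) {δ : ℝ} (hδ0 : 0 ≤ δ) (hδ1 : δ ≤ 1) :
    (#{u | (1 - (Fintype.card S : ℝ)⁻¹) * (1 + δ) * Fintype.card ι < hammingDist u γ} : ℝ)
      ≤ Fintype.card S ^ Fintype.card ι
        * exp (-(δ ^ 2 * (1 - (Fintype.card S : ℝ)⁻¹) * Fintype.card ι / 3)) := by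
  set q : ℝ := (Fintype.card S : ℝ)
  set n := Fintype.card ι
  set p := 1 - q⁻¹
  set b := p * (1 + δ) * n
  set t := log (1 + δ)
  have hq : 1 ≤ q := by simp [q, Nat.one_le_iff_ne_zero]
  have hp : 0 ≤ p := sub_nonneg.2 (inv_le_one_of_one_le₀ hq)
  have ht : 0 ≤ t := log_nonneg (by linarith)
  have hexp_t : exp t = 1 + δ := exp_log (by linarith)
  have hmarkov (u : ι → S) :
      (if b < hammingDist u γ then 1 else 0 : ℝ) ≤ (1 + δ) ^ hammingDist u γ * exp (-(t * b)) := by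
    rw [← hexp_t, ← exp_nat_mul, ← exp_add]
    split_ifs with h
    · exact one_le_exp (by nlinarith)
    · positivity
  have hmgf : (1 + (q - 1) * (1 + δ)) ^ n = q ^ n * (1 + p * δ) ^ n := by
    rw [← mul_pow]; congr 1; simp only [p]; field_simp; ring
  have hexponent : p * δ * n - t * b ≤ -(δ ^ 2 * p * n / 3) := by
    have := mul_le_mul_of_nonneg_left (add_sq_div_three_le_mul_log_one_add hδ0 hδ1)
      (mul_nonneg hp n.cast_nonneg)
    simp only [b]; nlinarith
  calc (#{u | b < hammingDist u γ} : ℝ) = ∑ u, if b < hammingDist u γ then 1 else 0 := by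
        simp
    _ ≤ ∑ u, (1 + δ) ^ hammingDist u γ * exp (-(t * b)) := sum_le_sum fun u _ => hmarkov u
    _ = q ^ n * (1 + p * δ) ^ n * exp (-(t * b)) := by
        rw [← sum_mul, sum_pow_hammingDist, hmgf]
    _ ≤ q ^ n * exp (p * δ) ^ n * exp (-(t * b)) := by
        gcongr
        linarith [add_one_le_exp (p * δ)]
    _ ≤ q ^ n * exp (-(δ ^ 2 * p * n / 3)) := by
        rw [← exp_nat_mul, mul_assoc, ← exp_add]
        gcongr
        linarith

end HammingTail

theorem card_le_add_card_undetected_resample {S : Type} [Fintype S] [DecidableEq S] {n : ℕ}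
    (b : ℝ) (γ : Fin n → S) (D : (Fin n → S) → DecOut) :
    Fintype.card (Fin n → S) ≤ #{u | D u ≠ .invalid} + #{u | b < hammingDist u γ} + 1
      + #{u | D (resample b γ u) ≠ .tampered ∧ resample b γ u ≠ γ} := by
  set A : Finset (Fin n → S) := {u | D u ≠ .invalid}
  set F : Finset (Fin n → S) := {u | b < hammingDist u γ}
  set B : Finset (Fin n → S) := {u | D (resample b γ u) ≠ .tampered ∧ resample b γ u ≠ γ}
  have hcover : univ ⊆ A ∪ F ∪ {γ} ∪ B := by
    intro u _
    simp only [A, F, B, mem_union, mem_filter, mem_univ, true_and, mem_singleton]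
    by_cases hA : D u ≠ .invalid; · tauto
    by_cases hF : b < hammingDist u γ; · tauto
    by_cases hγ : u = γ; · tauto
    rw [resample, if_pos (not_lt.1 hF)]
    exact Or.inr ⟨by simp_all, hγ⟩
  have h1 := card_union_le (A ∪ F ∪ {γ}) B
  have h2 := card_union_le (A ∪ F) {γ}
  have h3 := card_union_le A F
  have h4 := card_le_card hcover
  rw [card_singleton] at h2
  rw [card_univ] at h4
  omega

theorem one_sub_le_undetected_resample_prob {S : Type} [Fintype S] [DecidableEq S]
    [Nonempty S] {n : ℕ} {δ : ℝ} (hδ0 : 0 ≤ δ) (hδ1 : δ ≤ 1) (γ : Fin n → S)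
    (D : (Fin n → S) → DecOut) :
    1 - #{u | D u ≠ .invalid} * ((Fintype.card S : ℝ) ^ n)⁻¹ - ((Fintype.card S : ℝ) ^ n)⁻¹
        - exp (-(δ ^ 2 * (1 - (Fintype.card S : ℝ)⁻¹) * n / 3))
      ≤ #{u | D (resample ((1 - (Fintype.card S : ℝ)⁻¹) * (1 + δ) * n) γ u) ≠ .tampered
            ∧ resample ((1 - (Fintype.card S : ℝ)⁻¹) * (1 + δ) * n) γ u ≠ γ}
          * ((Fintype.card S : ℝ) ^ n)⁻¹ := by
  have hcover :=
    card_le_add_card_undetected_resample ((1 - (Fintype.card S : ℝ)⁻¹) * (1 + δ) * n) γ D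
  have htail := card_hammingDist_gt_le γ hδ0 hδ1
  rw [Fintype.card_fun, Fintype.card_fin] at hcover
  rw [Fintype.card_fin] at htail
  have hcover' := (Nat.cast_le (α := ℝ)).2 hcover
  push_cast at hcover'
  have hqn : 0 < (Fintype.card S : ℝ) ^ n := by positivity
  have h1 := mul_le_mul_of_nonneg_right hcover' (inv_nonneg.2 hqn.le)
  rw [mul_inv_cancel₀ hqn.ne'] at h1
  linear_combination h1 + (div_le_iff₀' hqn).2 htail

theorem stmt_5_general
    {S K : Type} [Fintype S] [DecidableEq S] [Fintype K]
    {n : ℕ} (hq : 2 ≤ Fintype.card S)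
    (δ : ℝ) (hδ0 : 0 < δ) (hδ1 : δ < 1)
    (w : K → ℝ) (hw0 : ∀ k, 0 ≤ w k) (hw1 : ∑ k, w k = 1)
    (Enc : K → Fin n → S) (Dec : K → (Fin n → S) → DecOut)
    (ε : ℝ)
    (havgsound :
      (∑ k, ∑ u : Fin n → S,
        if Dec k u ≠ DecOut.invalid
        then w k * ((Fintype.card S : ℝ) ^ n)⁻¹ else 0) ≤ ε) :
    1 - ε - ((Fintype.card S : ℝ) ^ n)⁻¹
      - Real.exp (-(δ ^ 2 * (1 - (Fintype.card S : ℝ)⁻¹) * n / 3))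
    ≤ (∑ k, ∑ u : Fin n → S,
        if Dec k (resample ((1 - (Fintype.card S : ℝ)⁻¹) * (1 + δ) * n) (Enc k) u)
              ≠ DecOut.tampered
           ∧ resample ((1 - (Fintype.card S : ℝ)⁻¹) * (1 + δ) * n) (Enc k) u ≠ Enc k
        then w k * ((Fintype.card S : ℝ) ^ n)⁻¹ else 0) := by
  have : Nonempty S := Fintype.card_pos_iff.1 (by omega)
  have hkey (k : K) := one_sub_le_undetected_resample_prob hδ0.le hδ1.le (Enc k) (Dec k)
  simp only [← sum_filter, sum_const, nsmul_eq_mul] at havgsound ⊢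
  calc _ ≤ ∑ k, w k * (1 - #{u | Dec k u ≠ .invalid} * ((Fintype.card S : ℝ) ^ n)⁻¹
          - ((Fintype.card S : ℝ) ^ n)⁻¹
          - exp (-(δ ^ 2 * (1 - (Fintype.card S : ℝ)⁻¹) * n / 3))) := by
        simp only [mul_sub, sum_sub_distrib, ← sum_mul, mul_one, hw1, one_mul, mul_left_comm (w _)]
        linarith
    _ ≤ _ := sum_le_sum fun k _ =>
        (mul_le_mul_of_nonneg_left (hkey k) (hw0 k)).trans_eq (mul_left_comm _ _ _)

/-- Relaxed (average) soundness: if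
`P_{sk,Û}[Dec(sk, Û) ≠ invalid] ≤ ε` for a uniform `Û` independent of `sk`, then for
`δ ∈ (0,1)` and `α = (1 - 1/q)(1 + δ)`, the tamper-detection failure against the
truncated uniform resampler with budget `α·n` is at least
`1 - ε - q^(-n) - exp(-δ²(1 - 1/q)n/3)`. -/
theorem stmt_5
    {S K : Type} [Fintype S] [DecidableEq S] [Fintype K] [Nonempty K]
    {n : ℕ} (hn : 1 ≤ n) (hq : 2 ≤ Fintype.card S)
    (δ : ℝ) (hδ0 : 0 < δ) (hδ1 : δ < 1)
    (w : K → ℝ) (hw0 : ∀ k, 0 ≤ w k) (hw1 : ∑ k, w k = 1)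
    (Enc : K → Fin n → S) (Dec : K → (Fin n → S) → DecOut)
    (ε : ℝ) (hε0 : 0 ≤ ε) (hε1 : ε ≤ 1)
    (havgsound :
      (∑ k, ∑ u : Fin n → S,
        if Dec k u ≠ DecOut.invalid
        then w k * ((Fintype.card S : ℝ) ^ n)⁻¹ else 0) ≤ ε) :
    1 - ε - ((Fintype.card S : ℝ) ^ n)⁻¹
      - Real.exp (-(δ ^ 2 * (1 - (Fintype.card S : ℝ)⁻¹) * n / 3))
    ≤ (∑ k, ∑ u : Fin n → S,
        if Dec k (resample ((1 - (Fintype.card S : ℝ)⁻¹) * (1 + δ) * n) (Enc k) u)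
              ≠ DecOut.tampered
           ∧ resample ((1 - (Fintype.card S : ℝ)⁻¹) * (1 + δ) * n) (Enc k) u ≠ Enc k
        then w k * ((Fintype.card S : ℝ) ^ n)⁻¹ else 0) :=
  stmt_5_general hq δ hδ0 hδ1 w hw0 hw1 Enc Dec ε havgsound
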